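/- arXiv:1904.11497 — 6 statements merged into one kernel-verified Lean document; each statement's English description precedes it below -/
import Mathlib

section
/- For two vectors u, v in the Euclidean plane ℝ², we have ‖u‖² + ‖v‖² + ‖u + v‖² ≥ 2√3 · √(‖u‖²‖v‖² − ⟨u, v⟩²). -/
open Real RealInnerProductSpace

lemma three_mul_sub_sq_le_sq (a b c : ℝ) : 3 * (a * b - c ^ 2) ≤ (a + b + c) ^ 2 := by
  have h : 4 * ((a + b + c) ^ 2 - 3 * (a * b - c ^ 2)) = 3 * (a - b) ^ 2 + (a + b + 4 * c) ^ 2 := by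
    ring
  linarith [sq_nonneg (a - b), sq_nonneg (a + b + 4 * c)]

lemma sqrt_three_mul_sqrt_sub_sq_le {a b c : ℝ} (h : 0 ≤ a + b + c) :
    √3 * √(a * b - c ^ 2) ≤ a + b + c := by
  rw [← sqrt_mul (by norm_num), sqrt_le_iff]
  exact ⟨h, three_mul_sub_sq_le_sq a b c⟩

theorem two_mul_sqrt_three_mul_sqrt_le_norm_sq_add {E : Type*} [NormedAddCommGroup E]
    [InnerProductSpace ℝ E] (u v : E) :
    2 * √3 * √(‖u‖ ^ 2 * ‖v‖ ^ 2 - ⟪u, v⟫ ^ 2) ≤ ‖u‖ ^ 2 + ‖v‖ ^ 2 + ‖u + v‖ ^ 2 := by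
  have hadd : ‖u + v‖ ^ 2 = ‖u‖ ^ 2 + 2 * ⟪u, v⟫ + ‖v‖ ^ 2 := norm_add_sq_real u v
  have hnonneg : 0 ≤ ‖u‖ ^ 2 + ‖v‖ ^ 2 + ⟪u, v⟫ := by
    linarith [sq_nonneg ‖u‖, sq_nonneg ‖v‖, sq_nonneg ‖u + v‖]
  linarith [sqrt_three_mul_sqrt_sub_sq_le hnonneg]

theorem weitzenbock_vector (u v : EuclideanSpace ℝ (Fin 2)) :
    ‖u‖^2 + ‖v‖^2 + ‖u + v‖^2 ≥
      2 * Real.sqrt 3 * Real.sqrt (‖u‖^2 * ‖v‖^2 - (inner ℝ u v : ℝ)^2) :=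
  two_mul_sqrt_three_mul_sqrt_le_norm_sq_add u v
end

section
/- For two vectors u = (u₁, u₂), v = (v₁, v₂) in ℝ², with u ∧ v := u₁v₂ − u₂v₁, we have ‖u‖² + ‖v‖² + ‖u + v‖² ≥ 2√3 · (u ∧ v). -/
/-!
Expanding the norms, the left side minus the right side equals `½ ‖2u + v + √3 J v‖²`, where `J` is
the rotation by a right angle, so it is nonnegative.
-/

open Real

lemma EuclideanSpace.norm_sq_eq_fin_two (w : EuclideanSpace ℝ (Fin 2)) :
    ‖w‖ ^ 2 = w 0 ^ 2 + w 1 ^ 2 := by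
  simp [EuclideanSpace.real_norm_sq_eq, Fin.sum_univ_two]

lemma weitzenbock_gap_eq_sum_sq (a b c d : ℝ) :
    2 * ((a ^ 2 + b ^ 2) + (c ^ 2 + d ^ 2) + ((a + c) ^ 2 + (b + d) ^ 2)
        - 2 * √3 * (a * d - b * c)) =
      (2 * a + c - √3 * d) ^ 2 + (2 * b + d + √3 * c) ^ 2 := by
  linear_combination (-(c ^ 2 + d ^ 2)) * sq_sqrt (show (0 : ℝ) ≤ 3 by norm_num)

lemma two_mul_sqrt_three_mul_wedge_le (a b c d : ℝ) :
    2 * √3 * (a * d - b * c) ≤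
      (a ^ 2 + b ^ 2) + (c ^ 2 + d ^ 2) + ((a + c) ^ 2 + (b + d) ^ 2) := by
  have hsq := add_nonneg (sq_nonneg (2 * a + c - √3 * d)) (sq_nonneg (2 * b + d + √3 * c))
  rw [← weitzenbock_gap_eq_sum_sq] at hsq
  linarith

theorem weitzenbock_wedge (u v : EuclideanSpace ℝ (Fin 2)) :
    ‖u‖^2 + ‖v‖^2 + ‖u + v‖^2 ≥ 2 * Real.sqrt 3 * (u 0 * v 1 - u 1 * v 0) := by
  simp only [EuclideanSpace.norm_sq_eq_fin_two, PiLp.add_apply]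
  exact two_mul_sqrt_three_mul_wedge_le (u 0) (u 1) (v 0) (v 1)
end

section
/- Let u, v ∈ ℝ² and let R be the rotation of the plane by angle π/3 (counterclockwise). Then ‖u‖² + ‖v‖² + ‖u + v‖² = 2√3 · (u ∧ v) + 2‖u + R(v)‖², where u ∧ v = u₁v₂ − u₂v₁. -/
/-!
If `φ` is the angle from `u` to `v`, then `⟪u, v⟫ = ‖u‖ ‖v‖ cos φ`, `u ∧ v = ‖u‖ ‖v‖ sin φ` and
`⟪u, R v⟫ = ‖u‖ ‖v‖ cos (φ + π/3) = ½ ⟪u, v⟫ - (√3/2) (u ∧ v)`. As `R` is an isometry, expanding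
`‖u + R v‖²` turns the right-hand side into `2‖u‖² + 2‖v‖² + 2⟪u, v⟫ = ‖u‖² + ‖v‖² + ‖u + v‖²`.
-/

open Real
open scoped InnerProductSpace

namespace EuclideanSpace

/-- For `c = cos θ`, `s = sin θ` this is the counterclockwise rotation by `θ`. -/
noncomputable def rotationBy (c s : ℝ) (w : EuclideanSpace ℝ (Fin 2)) : EuclideanSpace ℝ (Fin 2) :=
  (WithLp.equiv 2 (Fin 2 → ℝ)).symm ![c * w 0 - s * w 1, s * w 0 + c * w 1]

def wedge (u v : EuclideanSpace ℝ (Fin 2)) : ℝ := u 0 * v 1 - u 1 * v 0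

variable (c s : ℝ) (u v : EuclideanSpace ℝ (Fin 2))

lemma norm_sq_fin_two : ‖v‖ ^ 2 = v 0 ^ 2 + v 1 ^ 2 := by
  simp [real_norm_sq_eq, Fin.sum_univ_two]

lemma inner_fin_two : ⟪u, v⟫_ℝ = u 0 * v 0 + u 1 * v 1 := by
  simp [PiLp.inner_apply, Fin.sum_univ_two, mul_comm]

lemma norm_rotationBy_sq : ‖rotationBy c s v‖ ^ 2 = (c ^ 2 + s ^ 2) * ‖v‖ ^ 2 := by
  simp only [norm_sq_fin_two, rotationBy, WithLp.equiv_symm_apply, Matrix.cons_val_zero,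
    Matrix.cons_val_one]
  ring

lemma inner_rotationBy : ⟪u, rotationBy c s v⟫_ℝ = c * ⟪u, v⟫_ℝ - s * wedge u v := by
  simp only [inner_fin_two, wedge, rotationBy, WithLp.equiv_symm_apply, Matrix.cons_val_zero,
    Matrix.cons_val_one]
  ring

lemma norm_add_rotationBy_sq :
    ‖u + rotationBy c s v‖ ^ 2 =
      ‖u‖ ^ 2 + (c ^ 2 + s ^ 2) * ‖v‖ ^ 2 + 2 * c * ⟪u, v⟫_ℝ - 2 * s * wedge u v := by
  rw [norm_add_sq_real, inner_rotationBy, norm_rotationBy_sq]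
  ring

end EuclideanSpace

theorem weitzenbock_identity (u v : EuclideanSpace ℝ (Fin 2))
    (R : EuclideanSpace ℝ (Fin 2) → EuclideanSpace ℝ (Fin 2))
    (hR : ∀ w : EuclideanSpace ℝ (Fin 2),
      R w = (WithLp.equiv 2 (Fin 2 → ℝ)).symm
        ![(1/2) * w 0 - (Real.sqrt 3 / 2) * w 1, (Real.sqrt 3 / 2) * w 0 + (1/2) * w 1]) :
    ‖u‖^2 + ‖v‖^2 + ‖u + v‖^2 =
      2 * Real.sqrt 3 * (u 0 * v 1 - u 1 * v 0) + 2 * ‖u + R v‖^2 := by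
  have hRv : R v = EuclideanSpace.rotationBy (1 / 2) (√3 / 2) v := hR v
  have hunit : (1 / 2 : ℝ) ^ 2 + (√3 / 2) ^ 2 = 1 := by
    linear_combination sq_sqrt (show (0 : ℝ) ≤ 3 by norm_num) / 4
  have hsum := EuclideanSpace.norm_add_rotationBy_sq (1 / 2) (√3 / 2) u v
  rw [hunit] at hsum
  rw [hRv, hsum, norm_add_sq_real, EuclideanSpace.wedge]
  ring
end

section
/- For u, v ∈ ℝ², equality ‖u‖² + ‖v‖² + ‖u + v‖² = 2√3 · (u ∧ v) holds if and only if u = −R(v), where R is rotation by π/3. -/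
/-!
Expanding `‖u + R v‖²` with `⟪u, R v⟫ = ⟪u, v⟫ / 2 - (√3 / 2) (u ∧ v)` and `‖R v‖ = ‖v‖` gives
`‖u‖² + ‖v‖² + ‖u + v‖² - 2√3 (u ∧ v) = 2 ‖u + R v‖²`, so equality holds exactly when
`u + R v = 0`.
-/

open Real

noncomputable def planeRotation (c s : ℝ) (w : EuclideanSpace ℝ (Fin 2)) :
    EuclideanSpace ℝ (Fin 2) :=
  (WithLp.equiv 2 (Fin 2 → ℝ)).symm ![c * w 0 - s * w 1, s * w 0 + c * w 1]

def wedge (u v : EuclideanSpace ℝ (Fin 2)) : ℝ := u 0 * v 1 - u 1 * v 0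

theorem inner_planeRotation (c s : ℝ) (u v : EuclideanSpace ℝ (Fin 2)) :
    inner ℝ u (planeRotation c s v) = c * inner ℝ u v - s * wedge u v := by
  simp only [planeRotation, wedge, PiLp.inner_apply, Fin.sum_univ_two, WithLp.equiv_symm_apply,
    Matrix.cons_val_zero, Matrix.cons_val_one, RCLike.inner_apply, conj_trivial]
  ring

theorem norm_planeRotation {c s : ℝ} (h : c ^ 2 + s ^ 2 = 1) (v : EuclideanSpace ℝ (Fin 2)) :
    ‖planeRotation c s v‖ = ‖v‖ := by
  have hsq : ‖planeRotation c s v‖ ^ 2 = ‖v‖ ^ 2 := by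
    simp only [EuclideanSpace.norm_sq_eq, planeRotation, Fin.sum_univ_two, WithLp.equiv_symm_apply,
      Matrix.cons_val_zero, Matrix.cons_val_one, Real.norm_eq_abs, sq_abs]
    linear_combination (v 0 ^ 2 + v 1 ^ 2) * h
  exact (pow_left_inj₀ (norm_nonneg _) (norm_nonneg _) two_ne_zero).mp hsq

theorem weitzenbock_defect (u v : EuclideanSpace ℝ (Fin 2)) :
    ‖u‖ ^ 2 + ‖v‖ ^ 2 + ‖u + v‖ ^ 2 - 2 * √3 * wedge u v =
      2 * ‖u + planeRotation (1 / 2) (√3 / 2) v‖ ^ 2 := by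
  have hunit : (1 / 2 : ℝ) ^ 2 + (√3 / 2) ^ 2 = 1 := by
    linear_combination (sq_sqrt (by norm_num : (0 : ℝ) ≤ 3)) / 4
  rw [norm_add_sq_real, norm_add_sq_real, inner_planeRotation, norm_planeRotation hunit]
  ring

theorem weitzenbock_eq_iff_rot (u v : EuclideanSpace ℝ (Fin 2))
    (R : EuclideanSpace ℝ (Fin 2) → EuclideanSpace ℝ (Fin 2))
    (hR : ∀ w : EuclideanSpace ℝ (Fin 2),
      R w = (WithLp.equiv 2 (Fin 2 → ℝ)).symm
        ![(1/2) * w 0 - (Real.sqrt 3 / 2) * w 1, (Real.sqrt 3 / 2) * w 0 + (1/2) * w 1]) :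
    ‖u‖^2 + ‖v‖^2 + ‖u + v‖^2 = 2 * Real.sqrt 3 * (u 0 * v 1 - u 1 * v 0) ↔ u = -R v := by
  obtain rfl : R = planeRotation (1 / 2) (√3 / 2) := funext hR
  rw [← sub_eq_zero, ← wedge, weitzenbock_defect, eq_neg_iff_add_eq_zero]
  simp
end

section
/- For vectors u, v ∈ ℝ³ with ‖u‖ = 1, we have 2√3 · ‖u × v‖ ≤ 1 + ‖v‖² + ‖u − v‖², with equality if ‖v‖ = ‖u − v‖ = 1. -/
/-!
This is Weitzenböck's inequality: the squared side lengths of a triangle sum to at least `4√3`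
times its area. For the triangle spanned by `u` and `v`, twice the area is `‖u × v‖`, the square
root of the Gram determinant `‖u‖²‖v‖² - ⟪u, v⟫²` (Lagrange's identity). With `a = ‖u‖²`,
`b = ‖v‖²`, `t = ⟪u, v⟫`, the squared inequality says that the quadratic form
`(2t - (a + b)/2)² + 3/4 (a - b)²` is nonnegative; it vanishes exactly for equilateral triangles.
-/

open Matrix RealInnerProductSpace

theorem EuclideanSpace.norm_sq_crossProduct (u v : EuclideanSpace ℝ (Fin 3)) :
    ‖WithLp.toLp 2 (u.ofLp ⨯₃ v.ofLp)‖ ^ 2 = ‖u‖ ^ 2 * ‖v‖ ^ 2 - ⟪u, v⟫ ^ 2 := by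
  simp only [← real_inner_self_eq_norm_sq, EuclideanSpace.inner_eq_star_dotProduct,
    star_trivial, cross_dot_cross, dotProduct_comm u.ofLp]
  ring

section Weitzenbock

variable {E : Type*} [NormedAddCommGroup E] [InnerProductSpace ℝ E]

theorem three_mul_gram_le_sq (u v : E) :
    3 * (‖u‖ ^ 2 * ‖v‖ ^ 2 - ⟪u, v⟫ ^ 2) ≤ ((‖u‖ ^ 2 + ‖v‖ ^ 2 + ‖u - v‖ ^ 2) / 2) ^ 2 := by
  rw [norm_sub_sq_real]
  nlinarith [sq_nonneg (‖u‖ ^ 2 - ‖v‖ ^ 2), sq_nonneg (4 * ⟪u, v⟫ - ‖u‖ ^ 2 - ‖v‖ ^ 2)]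

theorem weitzenbock (u v : E) :
    2 * √3 * √(‖u‖ ^ 2 * ‖v‖ ^ 2 - ⟪u, v⟫ ^ 2) ≤ ‖u‖ ^ 2 + ‖v‖ ^ 2 + ‖u - v‖ ^ 2 := by
  have hS : 0 ≤ (‖u‖ ^ 2 + ‖v‖ ^ 2 + ‖u - v‖ ^ 2) / 2 := by positivity
  calc 2 * √3 * √(‖u‖ ^ 2 * ‖v‖ ^ 2 - ⟪u, v⟫ ^ 2)
      = 2 * √(3 * (‖u‖ ^ 2 * ‖v‖ ^ 2 - ⟪u, v⟫ ^ 2)) := by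
        rw [mul_assoc, Real.sqrt_mul zero_le_three]
    _ ≤ 2 * √(((‖u‖ ^ 2 + ‖v‖ ^ 2 + ‖u - v‖ ^ 2) / 2) ^ 2) := by
        gcongr; exact three_mul_gram_le_sq u v
    _ = ‖u‖ ^ 2 + ‖v‖ ^ 2 + ‖u - v‖ ^ 2 := by
        rw [Real.sqrt_sq hS]; ring

theorem weitzenbock_eq_of_equilateral {u v : E} (hv : ‖v‖ = ‖u‖) (huv : ‖u - v‖ = ‖u‖) :
    2 * √3 * √(‖u‖ ^ 2 * ‖v‖ ^ 2 - ⟪u, v⟫ ^ 2) = ‖u‖ ^ 2 + ‖v‖ ^ 2 + ‖u - v‖ ^ 2 := by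
  have hinner : ⟪u, v⟫ = ‖u‖ ^ 2 / 2 := by
    have := norm_sub_sq_real u v
    rw [huv, hv] at this
    linarith
  have hgram : ‖u‖ ^ 2 * ‖v‖ ^ 2 - ⟪u, v⟫ ^ 2 = (√3 / 2 * ‖u‖ ^ 2) ^ 2 := by
    rw [hinner, hv, mul_pow, div_pow √3, Real.sq_sqrt zero_le_three]
    ring
  rw [hgram, Real.sqrt_sq (by positivity), hv, huv, ← mul_assoc, mul_div_assoc', mul_assoc,
    Real.mul_self_sqrt zero_le_three]
  ring

end Weitzenbock

theorem cross_ineq (u v : EuclideanSpace ℝ (Fin 3)) (hu : ‖u‖ = 1)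
    (cross : EuclideanSpace ℝ (Fin 3) → EuclideanSpace ℝ (Fin 3) → EuclideanSpace ℝ (Fin 3))
    (hcross : ∀ a b, cross a b = (WithLp.equiv 2 (Fin 3 → ℝ)).symm
      ![a 1 * b 2 - a 2 * b 1, a 2 * b 0 - a 0 * b 2, a 0 * b 1 - a 1 * b 0]) :
    2 * Real.sqrt 3 * ‖cross u v‖ ≤ 1 + ‖v‖^2 + ‖u - v‖^2 ∧
    (‖v‖ = 1 → ‖u - v‖ = 1 → 2 * Real.sqrt 3 * ‖cross u v‖ = 1 + ‖v‖^2 + ‖u - v‖^2) := by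
  have hnorm : ‖cross u v‖ = √(‖u‖ ^ 2 * ‖v‖ ^ 2 - ⟪u, v⟫ ^ 2) := by
    rw [hcross u v, ← EuclideanSpace.norm_sq_crossProduct, Real.sqrt_sq (norm_nonneg _)]
    rfl
  have hu2 : ‖u‖ ^ 2 = 1 := by rw [hu, one_pow]
  rw [hnorm]
  refine ⟨hu2 ▸ weitzenbock u v, fun hv huv => ?_⟩
  exact hu2 ▸ weitzenbock_eq_of_equilateral (hv.trans hu.symm) (huv.trans hu.symm)
end

section
/- Let A, B, C be three points in the Euclidean plane ℝ² forming a triangle. Then dist(A,B)² + dist(B,C)² + dist(C,A)² ≥ 4√3 · |area(A,B,C)|, where area(A,B,C) = (1/2)·det(B − A, C − A). -/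
/-!
Put `u = B - A = (a, b)` and `v = C - A = (c, d)`. For `s = ±√3` one has the sum-of-squares identity
`a² + b² + c² + d² - (ac + bd) - s (ad - bc) = (a - (c + s d)/2)² + (b - (d - s c)/2)²`,
where `((c + s d)/2, (d - s c)/2)` is `v` rotated by `∓60°`. The left side is half the sum of the
squared side lengths minus `s · det(u, v)`, so both signs together bound `2√3 |det(u, v)|`.
-/

lemma mul_det_le_of_sq_eq_three {s : ℝ} (hs : s ^ 2 = 3) (a b c d : ℝ) :
    s * (a * d - b * c) ≤ a ^ 2 + b ^ 2 + c ^ 2 + d ^ 2 - (a * c + b * d) := by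
  have sum_of_squares :
      a ^ 2 + b ^ 2 + c ^ 2 + d ^ 2 - (a * c + b * d) - s * (a * d - b * c) =
        (a - (c + s * d) / 2) ^ 2 + (b - (d - s * c) / 2) ^ 2 := by
    linear_combination (-(c ^ 2 + d ^ 2) / 4) * hs
  linarith [sq_nonneg (a - (c + s * d) / 2), sq_nonneg (b - (d - s * c) / 2)]

lemma two_mul_sqrt_three_mul_abs_det_le (a b c d : ℝ) :
    2 * √3 * |a * d - b * c| ≤ (a ^ 2 + b ^ 2) + ((a - c) ^ 2 + (b - d) ^ 2) + (c ^ 2 + d ^ 2) := by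
  have hs : √3 ^ 2 = 3 := Real.sq_sqrt (by norm_num)
  have hpos := mul_det_le_of_sq_eq_three hs a b c d
  have hneg := mul_det_le_of_sq_eq_three (s := -√3) (by rw [neg_sq, hs]) a b c d
  rcases abs_cases (a * d - b * c) with ⟨h, -⟩ | ⟨h, -⟩ <;> rw [h] <;> linarith

lemma EuclideanSpace.dist_sq_fin_two (X Y : EuclideanSpace ℝ (Fin 2)) :
    dist X Y ^ 2 = (X 0 - Y 0) ^ 2 + (X 1 - Y 1) ^ 2 := by
  rw [EuclideanSpace.dist_eq, Real.sq_sqrt (by positivity)]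
  simp [Fin.sum_univ_two, Real.dist_eq, sq_abs]

theorem weitzenbock_points (A B C : EuclideanSpace ℝ (Fin 2)) :
    dist A B ^ 2 + dist B C ^ 2 + dist C A ^ 2 ≥
      4 * Real.sqrt 3 *
        |(1/2) * ((B - A) 0 * (C - A) 1 - (B - A) 1 * (C - A) 0)| := by
  have h := two_mul_sqrt_three_mul_abs_det_le (B 0 - A 0) (B 1 - A 1) (C 0 - A 0) (C 1 - A 1)
  simp only [EuclideanSpace.dist_sq_fin_two, PiLp.sub_apply, abs_mul]
  rw [abs_of_pos (by norm_num : (0 : ℝ) < 1 / 2)]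
  convert h using 1 <;> ring
end
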